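/- Let (A_n)_{n≥1} be a sequence of d×d complex matrices such that P_n ≠ 0 for every n (so in particular every A_n ≠ 0). If the sequence n ↦ A_n/‖A_n‖ does not converge, and there is no nonzero row vector r ∈ ℂ^d that is a left-eigenvector of every subsequential limit of the sequence n ↦ A_n/‖A_n‖, then the sequence n ↦ P_n/‖P_n‖ does not converge. -/

import Mathlib

/-!
If `P_n/‖P_n‖ → Q`, then `Q ≠ 0` since `‖Q‖ = 1`. Along any subsequence with
`A_{φ k}/‖A_{φ k}‖ → T`, the products `(P_{φ k - 1}/‖P_{φ k - 1}‖)(A_{φ k}/‖A_{φ k}‖)` are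
positive multiples of `P_{φ k}` and tend to `Q T`; normalizing them again gives
`P_{φ k}/‖P_{φ k}‖ → Q`, so `Q T = ‖Q T‖ Q`. Hence every nonzero row of `Q` is a common
left-eigenvector of all subsequential limits `T`.
-/

open Filter Matrix Topology

/-- `‖X‖`: sum of the moduli of the entries of a complex matrix. -/
noncomputable def matEntrySumNorm {d : ℕ} (M : Matrix (Fin d) (Fin d) ℂ) : ℝ :=
  ∑ i, ∑ j, ‖M i j‖

/-- `P_n = A_1 ⋯ A_n` (ordered product). -/
noncomputable def matProd {d : ℕ} (A : ℕ → Matrix (Fin d) (Fin d) ℂ) (n : ℕ) :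
    Matrix (Fin d) (Fin d) ℂ :=
  ((List.range n).map fun i => A (i + 1)).prod

noncomputable def matNormalize {d : ℕ} (M : Matrix (Fin d) (Fin d) ℂ) :
    Matrix (Fin d) (Fin d) ℂ :=
  (matEntrySumNorm M)⁻¹ • M

section

variable {d : ℕ}

lemma matEntrySumNorm_nonneg (M : Matrix (Fin d) (Fin d) ℂ) : 0 ≤ matEntrySumNorm M :=
  Finset.sum_nonneg fun _ _ => Finset.sum_nonneg fun _ _ => norm_nonneg _

lemma matEntrySumNorm_eq_zero_iff {M : Matrix (Fin d) (Fin d) ℂ} :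
    matEntrySumNorm M = 0 ↔ M = 0 := by
  simp only [matEntrySumNorm, Finset.sum_eq_zero_iff_of_nonneg
      (fun i _ => Finset.sum_nonneg fun j _ => norm_nonneg (M i j)),
    Finset.sum_eq_zero_iff_of_nonneg (fun _ _ => norm_nonneg _), Finset.mem_univ,
    forall_true_left, norm_eq_zero, ← Matrix.ext_iff, Matrix.zero_apply]

lemma matEntrySumNorm_pos {M : Matrix (Fin d) (Fin d) ℂ} (hM : M ≠ 0) :
    0 < matEntrySumNorm M :=
  (matEntrySumNorm_nonneg M).lt_of_ne' (mt matEntrySumNorm_eq_zero_iff.mp hM)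

lemma continuous_matEntrySumNorm : Continuous (matEntrySumNorm (d := d)) := by
  unfold matEntrySumNorm
  fun_prop

lemma matEntrySumNorm_smul (r : ℝ) (M : Matrix (Fin d) (Fin d) ℂ) :
    matEntrySumNorm (r • M) = |r| * matEntrySumNorm M := by
  simp [matEntrySumNorm, Finset.mul_sum]

lemma matEntrySumNorm_smul_matNormalize (M : Matrix (Fin d) (Fin d) ℂ) :
    matEntrySumNorm M • matNormalize M = M := by
  rcases eq_or_ne M 0 with rfl | hM
  · simp [matNormalize]
  · rw [matNormalize, smul_smul, mul_inv_cancel₀ (matEntrySumNorm_pos hM).ne', one_smul]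

lemma matEntrySumNorm_matNormalize {M : Matrix (Fin d) (Fin d) ℂ} (hM : M ≠ 0) :
    matEntrySumNorm (matNormalize M) = 1 := by
  have hpos := matEntrySumNorm_pos hM
  rw [matNormalize, matEntrySumNorm_smul, abs_of_pos (inv_pos.mpr hpos), inv_mul_cancel₀ hpos.ne']

lemma matNormalize_smul_of_pos {c : ℝ} (hc : 0 < c) (M : Matrix (Fin d) (Fin d) ℂ) :
    matNormalize (c • M) = matNormalize M := by
  rw [matNormalize, matNormalize, matEntrySumNorm_smul, abs_of_pos hc, smul_smul, mul_inv,
    mul_right_comm, inv_mul_cancel₀ hc.ne', one_mul]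

lemma matNormalize_mul_matNormalize {M N : Matrix (Fin d) (Fin d) ℂ} (hM : M ≠ 0) (hN : N ≠ 0) :
    matNormalize (matNormalize M * matNormalize N) = matNormalize (M * N) := by
  have hMpos := matEntrySumNorm_pos hM
  have hNpos := matEntrySumNorm_pos hN
  have hMN : matNormalize M * matNormalize N =
      ((matEntrySumNorm N)⁻¹ * (matEntrySumNorm M)⁻¹) • (M * N) := by
    simp only [matNormalize, Matrix.smul_mul, Matrix.mul_smul, smul_smul]
  rw [hMN, matNormalize_smul_of_pos (by positivity)]

lemma matEntrySumNorm_eq_one_of_tendsto_matNormalize {α : Type*} {l : Filter α} [l.NeBot]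
    {X : α → Matrix (Fin d) (Fin d) ℂ} {Q : Matrix (Fin d) (Fin d) ℂ} (hX : ∀ a, X a ≠ 0)
    (hQ : Tendsto (fun a => matNormalize (X a)) l (𝓝 Q)) : matEntrySumNorm Q = 1 :=
  tendsto_nhds_unique ((continuous_matEntrySumNorm.tendsto Q).comp hQ)
    (tendsto_const_nhds.congr fun a => (matEntrySumNorm_matNormalize (hX a)).symm)

lemma eq_matEntrySumNorm_smul_of_tendsto {α : Type*} {l : Filter α} [l.NeBot]
    {X : α → Matrix (Fin d) (Fin d) ℂ} {L Q : Matrix (Fin d) (Fin d) ℂ}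
    (hX : Tendsto X l (𝓝 L)) (hQ : Tendsto (fun a => matNormalize (X a)) l (𝓝 Q)) :
    L = matEntrySumNorm L • Q := by
  have hsmul := ((continuous_matEntrySumNorm.tendsto L).comp hX).smul hQ
  simp only [Function.comp_def, matEntrySumNorm_smul_matNormalize] at hsmul
  exact tendsto_nhds_unique hX hsmul

lemma matProd_succ (A : ℕ → Matrix (Fin d) (Fin d) ℂ) (n : ℕ) :
    matProd A (n + 1) = matProd A n * A (n + 1) := by
  simp [matProd, List.range_succ]

lemma mul_eq_smul_of_tendsto_matNormalize_matProd {A : ℕ → Matrix (Fin d) (Fin d) ℂ}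
    {Q T : Matrix (Fin d) (Fin d) ℂ} {φ : ℕ → ℕ} (hP : ∀ n, matProd A n ≠ 0)
    (hQ : Tendsto (fun n => matNormalize (matProd A n)) atTop (𝓝 Q)) (hφ : StrictMono φ)
    (hT : Tendsto (fun k => matNormalize (A (φ k))) atTop (𝓝 T)) :
    Q * T = matEntrySumNorm (Q * T) • Q := by
  have hprev : Tendsto (fun k => φ k - 1) atTop atTop :=
    (tendsto_sub_atTop_nat 1).comp hφ.tendsto_atTop
  refine eq_matEntrySumNorm_smul_of_tendsto ((hQ.comp hprev).mul hT)
    ((hQ.comp hφ.tendsto_atTop).congr' ?_)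
  filter_upwards [eventually_ge_atTop 1] with k hk
  obtain ⟨m, hm⟩ : ∃ m, φ k = m + 1 := ⟨φ k - 1, by have : k ≤ φ k := hφ.le_apply; omega⟩
  have hAne : A (m + 1) ≠ 0 := right_ne_zero_of_mul (matProd_succ A m ▸ hP (m + 1))
  simp only [Function.comp_apply, hm, Nat.add_sub_cancel]
  rw [matNormalize_mul_matNormalize (hP m) hAne, matProd_succ]

end

theorem normalized_product_diverges_general {d : ℕ}
    (A : ℕ → Matrix (Fin d) (Fin d) ℂ)
    (hP : ∀ n, matProd A n ≠ 0)
    (heig : ¬ ∃ r : Fin d → ℂ, r ≠ 0 ∧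
      ∀ T : Matrix (Fin d) (Fin d) ℂ,
        (∃ φ : ℕ → ℕ, StrictMono φ ∧
          Tendsto (fun k => (matEntrySumNorm (A (φ k)))⁻¹ • A (φ k)) atTop (nhds T)) →
        ∃ lam : ℂ, r ᵥ* T = lam • r) :
    ¬ ∃ Q : Matrix (Fin d) (Fin d) ℂ,
      Tendsto (fun n => (matEntrySumNorm (matProd A n))⁻¹ • matProd A n)
        atTop (nhds Q) := by
  rintro ⟨Q, hQ⟩
  have hQne : Q ≠ 0 := fun h => one_ne_zero <|
    (matEntrySumNorm_eq_one_of_tendsto_matNormalize hP hQ).symm.trans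
      (matEntrySumNorm_eq_zero_iff.mpr h)
  obtain ⟨i, hi⟩ := Function.ne_iff.mp hQne
  refine heig ⟨Q i, hi, fun T ⟨φ, hφ, hT⟩ => ⟨matEntrySumNorm (Q * T), ?_⟩⟩
  have hQT := mul_eq_smul_of_tendsto_matNormalize_matProd hP hQ hφ hT
  calc Q i ᵥ* T = (Q * T) i := (mul_apply_eq_vecMul Q T i).symm
    _ = matEntrySumNorm (Q * T) • Q i := congrFun hQT i
    _ = (matEntrySumNorm (Q * T) : ℂ) • Q i := (Complex.coe_smul _ _).symm

/-- Theorem 3.1: if `A_n/‖A_n‖` diverges and its subsequential limits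
have no common left-eigenvector, then `P_n/‖P_n‖` diverges. -/
theorem normalized_product_diverges {d : ℕ}
    (A : ℕ → Matrix (Fin d) (Fin d) ℂ)
    (hP : ∀ n, matProd A n ≠ 0)
    (hdiv : ¬ ∃ T : Matrix (Fin d) (Fin d) ℂ,
      Tendsto (fun n => (matEntrySumNorm (A n))⁻¹ • A n) atTop (nhds T))
    (heig : ¬ ∃ r : Fin d → ℂ, r ≠ 0 ∧
      ∀ T : Matrix (Fin d) (Fin d) ℂ,
        (∃ φ : ℕ → ℕ, StrictMono φ ∧
          Tendsto (fun k => (matEntrySumNorm (A (φ k)))⁻¹ • A (φ k)) atTop (nhds T)) →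
        ∃ lam : ℂ, r ᵥ* T = lam • r) :
    ¬ ∃ Q : Matrix (Fin d) (Fin d) ℂ,
      Tendsto (fun n => (matEntrySumNorm (matProd A n))⁻¹ • matProd A n)
        atTop (nhds Q) :=
  normalized_product_diverges_general A hP heig
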